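/- For every S-torsion-free R-module A, the S-completion Λ_S(A) is S-complete; in fact, Λ_S(A) is an S-pure submodule of the product Π_A = ∏_{s∈S} A/sA, i.e., Λ_S(A) ∩ s·Π_A = s·Λ_S(A) for all s ∈ S. -/

import Mathlib

/-! Write `Π = ∏_{t ∈ S} A/tA` and `Λ = Λ_S(A) ⊆ Π`. If `x ∈ Λ` is divisible by `s` in `Π`, lift
each `x_{st}` to a class `[s • a_t]`; cancelling `s` (torsion-freeness) shows that `z_t = [a_t]`
is again compatible, and `s • z = x`. This is purity, and completeness follows from it alone:
given classes `ξ_s ∈ Λ/sΛ` compatible in `s`, with lifts `x_s ∈ Λ`, the diagonal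
`u_t = (x_t)_t` lies in `Λ`, and `u - x_s ∈ Λ ∩ sΠ = sΛ`, so `u` maps to `ξ`. -/

open Submodule

/-- The submodule `s·A` of an `R`-module `A`. -/
def smulTop (R : Type) [CommRing R] (s : R)
    (A : Type) [AddCommGroup A] [Module R A] : Submodule R A :=
  Ideal.span {s} • (⊤ : Submodule R A)

/-- The natural projection `A/tA → A/sA` when `s ∣ t`. -/
def transMap (R : Type) [CommRing R]
    (A : Type) [AddCommGroup A] [Module R A] (s t : R) (h : s ∣ t) :
    (A ⧸ smulTop R t A) →ₗ[R] A ⧸ smulTop R s A :=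
  Submodule.mapQ _ _ LinearMap.id (by
    rw [Submodule.comap_id]
    exact Submodule.smul_mono (Ideal.span_singleton_le_span_singleton.mpr h) le_rfl)

/-- The S-completion `Λ_S(A) = lim_{s ∈ S} A/sA`, realized as the submodule of compatible
families in `∏_{s ∈ S} A/sA`. -/
def sCompletion (R : Type) [CommRing R] (S : Submonoid R)
    (A : Type) [AddCommGroup A] [Module R A] :
    Submodule R (∀ s : S, A ⧸ smulTop R (s : R) A) where
  carrier := {x | ∀ (s t : S) (h : (s : R) ∣ (t : R)), transMap R A s t h (x t) = x s}
  add_mem' := by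
    intro x y hx hy s t h
    rw [Pi.add_apply, Pi.add_apply, map_add, hx s t h, hy s t h]
  zero_mem' := by
    intro s t h
    rw [Pi.zero_apply, Pi.zero_apply, map_zero]
  smul_mem' := by
    intro r x hx s t h
    rw [Pi.smul_apply, Pi.smul_apply, map_smul, hx s t h]

theorem mem_sCompletion (R : Type) [CommRing R] (S : Submonoid R)
    (A : Type) [AddCommGroup A] [Module R A]
    (x : ∀ s : S, A ⧸ smulTop R (s : R) A) :
    x ∈ sCompletion R S A ↔
      ∀ (s t : S) (h : (s : R) ∣ (t : R)), transMap R A s t h (x t) = x s :=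
  Iff.rfl

/-- The natural map `λ_{S,A} : A → Λ_S(A)`. -/
def lamMap (R : Type) [CommRing R] (S : Submonoid R)
    (A : Type) [AddCommGroup A] [Module R A] :
    A →ₗ[R] sCompletion R S A :=
  LinearMap.codRestrict (sCompletion R S A)
    (LinearMap.pi fun s : S => (smulTop R (s : R) A).mkQ)
    (by
      intro a s t h
      show transMap R A s t h ((smulTop R (t : R) A).mkQ a) = (smulTop R (s : R) A).mkQ a
      simp only [transMap, Submodule.mkQ_apply, Submodule.mapQ_apply, LinearMap.id_apply])

section SMulTop

variable {R : Type} [CommRing R] {s : R}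
variable {M N : Type} [AddCommGroup M] [Module R M] [AddCommGroup N] [Module R N]

lemma mem_smulTop {x : M} : x ∈ smulTop R s M ↔ ∃ a : M, s • a = x := by
  rw [smulTop, ideal_span_singleton_smul, mem_smul_pointwise_iff_exists]
  simp

lemma map_mem_smulTop (f : M →ₗ[R] N) {x : M} (hx : x ∈ smulTop R s M) :
    f x ∈ smulTop R s N := by
  obtain ⟨a, rfl⟩ := mem_smulTop.1 hx
  exact mem_smulTop.2 ⟨f a, (map_smul f s a).symm⟩

lemma mem_smulTop_pi {ι : Type} {M : ι → Type} [∀ i, AddCommGroup (M i)] [∀ i, Module R (M i)]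
    {y : ∀ i, M i} : y ∈ smulTop R s (∀ i, M i) ↔ ∀ i, y i ∈ smulTop R s (M i) := by
  refine ⟨fun hy i => map_mem_smulTop (LinearMap.proj i) hy, fun hy => ?_⟩
  choose a ha using fun i => mem_smulTop.1 (hy i)
  exact mem_smulTop.2 ⟨a, funext ha⟩

lemma smul_eq_zero_of_quotient_smulTop (q : M ⧸ smulTop R s M) : s • q = 0 := by
  obtain ⟨a, rfl⟩ := (smulTop R s M).mkQ_surjective q
  rw [← map_smul, mkQ_apply, Submodule.Quotient.mk_eq_zero]
  exact mem_smulTop.2 ⟨a, rfl⟩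

lemma mkQ_eq_of_mkQ_smul_eq {t : R} (hs : ∀ x : M, s • x = 0 → x = 0) {a b : M}
    (h : (smulTop R (s * t) M).mkQ (s • a) = (smulTop R (s * t) M).mkQ (s • b)) :
    (smulTop R t M).mkQ a = (smulTop R t M).mkQ b := by
  rw [mkQ_apply, mkQ_apply, Submodule.Quotient.eq] at h ⊢
  obtain ⟨c, hc⟩ := mem_smulTop.1 h
  refine mem_smulTop.2 ⟨c, sub_eq_zero.1 (hs _ ?_)⟩
  rw [smul_sub, smul_smul, hc, smul_sub, sub_self]

end SMulTop

section SCompletion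

variable {R : Type} [CommRing R] {S : Submonoid R} {A : Type} [AddCommGroup A] [Module R A]

lemma transMap_mkQ {s t : R} (h : s ∣ t) (a : A) :
    transMap R A s t h ((smulTop R t A).mkQ a) = (smulTop R s A).mkQ a :=
  rfl

lemma apply_self_eq_zero_of_mem_smulTop {s : S} {y : ∀ t : S, A ⧸ smulTop R (t : R) A}
    (hy : y ∈ smulTop R (s : R) (∀ t : S, A ⧸ smulTop R (t : R) A)) : y s = 0 := by
  obtain ⟨c, hc⟩ := mem_smulTop.1 (mem_smulTop_pi.1 hy s)
  rw [← hc, smul_eq_zero_of_quotient_smulTop]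

variable (R S A)

lemma smul_sCompletion_le_inf_smulTop (s : R) :
    Ideal.span {s} • sCompletion R S A
      ≤ sCompletion R S A ⊓ smulTop R s (∀ t : S, A ⧸ smulTop R (t : R) A) :=
  le_inf smul_le_right (smul_mono le_rfl le_top)

lemma inf_smulTop_le_smul_sCompletion (s : S) (hs : ∀ x : A, (s : R) • x = 0 → x = 0) :
    sCompletion R S A ⊓ smulTop R (s : R) (∀ t : S, A ⧸ smulTop R (t : R) A)
      ≤ Ideal.span {(s : R)} • sCompletion R S A := by
  rintro x ⟨hx, hxs⟩
  have hlift : ∀ t : S, ∃ a : A, (smulTop R (s * t : S) A).mkQ ((s : R) • a) = x (s * t) := by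
    intro t
    obtain ⟨q, hq⟩ := mem_smulTop.1 (mem_smulTop_pi.1 hxs (s * t))
    obtain ⟨a, rfl⟩ := (smulTop R (s * t : S) A).mkQ_surjective q
    exact ⟨a, (map_smul _ _ _).trans hq⟩
  choose a ha using hlift
  have hz : (fun t : S => (smulTop R (t : R) A).mkQ (a t)) ∈ sCompletion R S A := by
    intro t t' h
    refine mkQ_eq_of_mkQ_smul_eq hs ?_
    have hst : ((s * t : S) : R) ∣ (s * t' : S) := mul_dvd_mul_left (s : R) h
    calc (smulTop R (s * t : S) A).mkQ ((s : R) • a t')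
        = transMap R A _ _ hst (x (s * t')) := by rw [← ha t', transMap_mkQ]
      _ = x (s * t) := hx _ _ hst
      _ = (smulTop R (s * t : S) A).mkQ ((s : R) • a t) := (ha t).symm
  rw [ideal_span_singleton_smul]
  refine ⟨_, hz, funext fun t => ?_⟩
  show (s : R) • (smulTop R (t : R) A).mkQ (a t) = x t
  rw [← map_smul, ← transMap_mkQ (show (t : R) ∣ (s * t : S) from dvd_mul_left _ _), ha t, hx]

variable {R S A}

lemma lamMap_sCompletion_surjective
    (hpure : ∀ s : S, sCompletion R S A ⊓ smulTop R (s : R) (∀ t : S, A ⧸ smulTop R (t : R) A)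
      ≤ Ideal.span {(s : R)} • sCompletion R S A) :
    Function.Surjective (lamMap R S (sCompletion R S A)) := by
  intro ξ
  choose x hx using fun s : S => (smulTop R (s : R) (sCompletion R S A)).mkQ_surjective (ξ.1 s)
  have hcompat : ∀ s t : S, (s : R) ∣ t →
      ((x t : ∀ t : S, A ⧸ smulTop R (t : R) A) - x s) ∈ smulTop R (s : R) _ := by
    intro s t h
    have h' := ξ.2 s t h
    rw [← hx s, ← hx t, transMap_mkQ, mkQ_apply, mkQ_apply, Submodule.Quotient.eq] at h'
    exact map_mem_smulTop (sCompletion R S A).subtype h'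
  have hdiag : ∀ s t : S, (s : R) ∣ t → (x t : ∀ t : S, A ⧸ smulTop R (t : R) A) s = (x s).1 s :=
    fun s t h => sub_eq_zero.1 (apply_self_eq_zero_of_mem_smulTop (hcompat s t h))
  set u : ∀ t : S, A ⧸ smulTop R (t : R) A := fun t => (x t).1 t
  have hu : u ∈ sCompletion R S A := fun s t h => ((x t).2 s t h).trans (hdiag s t h)
  have hsub : ∀ s : S, u - x s ∈ smulTop R (s : R) (∀ t : S, A ⧸ smulTop R (t : R) A) := by
    refine fun s => mem_smulTop_pi.2 fun t => ?_
    change (x t).1 t - (x s).1 t ∈ _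
    rw [← hdiag t (s * t) (dvd_mul_left (t : R) s)]
    exact map_mem_smulTop (LinearMap.proj t) (hcompat s (s * t) (dvd_mul_right (s : R) t))
  refine ⟨⟨u, hu⟩, Subtype.ext (funext fun s => ?_)⟩
  rw [← hx s]
  show (smulTop R (s : R) (sCompletion R S A)).mkQ ⟨u, hu⟩ = _
  rw [mkQ_apply, mkQ_apply, Submodule.Quotient.eq]
  have hmem := hpure s ⟨sub_mem hu (x s).2, hsub s⟩
  rw [ideal_span_singleton_smul] at hmem
  obtain ⟨z, hz, hzu⟩ := hmem
  exact mem_smulTop.2 ⟨⟨z, hz⟩, Subtype.ext hzu⟩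

end SCompletion

theorem sCompletion_complete_of_torsionFree
    (R : Type) [CommRing R] (S : Submonoid R)
    (A : Type) [AddCommGroup A] [Module R A]
    (htf : ∀ (s : S) (x : A), (s : R) • x = 0 → x = 0) :
    Function.Surjective (lamMap R S (sCompletion R S A)) ∧
    ∀ s : S,
      sCompletion R S A ⊓ smulTop R (s : R) (∀ t : S, A ⧸ smulTop R (t : R) A)
        = Ideal.span {(s : R)} • sCompletion R S A := by
  have hpure s := inf_smulTop_le_smul_sCompletion R S A s (htf s)
  exact ⟨lamMap_sCompletion_surjective hpure,
    fun s => (hpure s).antisymm (smul_sCompletion_le_inf_smulTop R S A s)⟩
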